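/- arXiv:1401.1381 — 3 statements merged into one kernel-verified Lean document; each statement's English description precedes it below -/
import Mathlib

section
/- The first four columns of the equivalent channel matrix of the 3D MIMO code satisfy the orthogonality relations ⟨h_1,h_2⟩ = ⟨h_1,h_4⟩ = ⟨h_2,h_3⟩ = ⟨h_3,h_4⟩ = 0 (for every channel matrix H ∈ ℂ^{2×4}). -/
/-!
The columns `h₁, …, h₄` are the images of `Re s₁, Im s₁, Re s₂, Im s₂`. These symbols occur only
on the diagonal of `X(s)`, so each `H · X` is `H` with its columns scaled by `κ_c w_c`, where `κ`
is the same for all four and the weight `w_c` is real for a real part and purely imaginary for an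
imaginary part (with a sign flip on the conjugated entries). The real inner product of the
stacked vectors is then `∑ ‖H_rc κ_c‖² Re (conj w_c · w'_c)`, which vanishes term by term as soon
as one weight is real and the other purely imaginary.
-/

noncomputable section

open scoped InnerProductSpace

namespace MIMO3D

/-- The Golden-code parameter θ = (1+√5)/2. -/
def goldenTheta : ℝ := (1 + Real.sqrt 5) / 2

/-- θ̄ = 1 − θ. -/
def goldenThetaBar : ℝ := 1 - goldenTheta

/-- α = 1 + i(1−θ). -/
def alpha : ℂ := 1 + Complex.I * (1 - (goldenTheta : ℂ))

/-- ᾱ = 1 + i(1−θ̄). -/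
def alphaBar : ℂ := 1 + Complex.I * (1 - (goldenThetaBar : ℂ))

/-- The 3D MIMO codeword matrix X(s), a 4×4 complex matrix built from the
eight information symbols s₁,…,s₈ (here 0-indexed as `s 0`,…,`s 7`). -/
def codeword (s : Fin 8 → ℂ) : Matrix (Fin 4) (Fin 4) ℂ :=
  ((Real.sqrt 5 : ℂ))⁻¹ •
  !![alpha * (s 0 + (goldenTheta : ℂ) * s 1),
     alpha * (s 2 + (goldenTheta : ℂ) * s 3),
     -(starRingEnd ℂ alpha) * (starRingEnd ℂ (s 4) + (goldenTheta : ℂ) * starRingEnd ℂ (s 5)),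
     -(starRingEnd ℂ alpha) * (starRingEnd ℂ (s 6) + (goldenTheta : ℂ) * starRingEnd ℂ (s 7));
     Complex.I * alphaBar * (s 2 + (goldenThetaBar : ℂ) * s 3),
     alphaBar * (s 0 + (goldenThetaBar : ℂ) * s 1),
     Complex.I * (starRingEnd ℂ alphaBar) * (starRingEnd ℂ (s 6) + (goldenThetaBar : ℂ) * starRingEnd ℂ (s 7)),
     -(starRingEnd ℂ alphaBar) * (starRingEnd ℂ (s 4) + (goldenThetaBar : ℂ) * starRingEnd ℂ (s 5));
     alpha * (s 4 + (goldenTheta : ℂ) * s 5),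
     alpha * (s 6 + (goldenTheta : ℂ) * s 7),
     (starRingEnd ℂ alpha) * (starRingEnd ℂ (s 0) + (goldenTheta : ℂ) * starRingEnd ℂ (s 1)),
     (starRingEnd ℂ alpha) * (starRingEnd ℂ (s 2) + (goldenTheta : ℂ) * starRingEnd ℂ (s 3));
     Complex.I * alphaBar * (s 6 + (goldenThetaBar : ℂ) * s 7),
     alphaBar * (s 4 + (goldenThetaBar : ℂ) * s 5),
     -(Complex.I * (starRingEnd ℂ alphaBar) * (starRingEnd ℂ (s 2) + (goldenThetaBar : ℂ) * starRingEnd ℂ (s 3))),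
     (starRingEnd ℂ alphaBar) * (starRingEnd ℂ (s 0) + (goldenThetaBar : ℂ) * starRingEnd ℂ (s 1))]

/-- ṽ(Y): stack the columns of the 2×4 complex matrix Y into ℂ^8
(giving (Y₁₁,Y₂₁,Y₁₂,Y₂₂,Y₁₃,Y₂₃,Y₁₄,Y₂₄)) and replace each complex entry z
by the pair (Re z, Im z), producing a vector of ℝ^16 (Euclidean space). -/
def tildeVec (Y : Matrix (Fin 2) (Fin 4) ℂ) : EuclideanSpace ℝ (Fin 16) :=
  WithLp.toLp 2 fun m =>
    if m.val % 2 = 0 then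
      (Y ⟨m.val % 4 / 2, by omega⟩ ⟨m.val / 4, by have := m.isLt; omega⟩).re
    else
      (Y ⟨m.val % 4 / 2, by omega⟩ ⟨m.val / 4, by have := m.isLt; omega⟩).im

/-- Recover the complex symbol vector s ∈ ℂ^8 from its real coordinate vector
s̃ = (Re s₁, Im s₁, …, Re s₈, Im s₈) ∈ ℝ^16. -/
def sOfReal (v : Fin 16 → ℝ) : Fin 8 → ℂ :=
  fun k => (v ⟨2 * k.val, by have := k.isLt; omega⟩ : ℂ)
    + (v ⟨2 * k.val + 1, by have := k.isLt; omega⟩ : ℂ) * Complex.I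

/-- The j-th column h_j (0-indexed: `hcol H j` is h_{j+1} of the paper) of the
equivalent channel matrix H_eq: the image of the j-th standard basis vector of
ℝ^16 under the ℝ-linear map s̃ ↦ ṽ(H · X(s)). -/
def hcol (H : Matrix (Fin 2) (Fin 4) ℂ) (j : Fin 16) : EuclideanSpace ℝ (Fin 16) :=
  tildeVec (H * codeword (sOfReal (Pi.single j 1)))

/-- The Gram–Schmidt residual r_j (0-indexed) of the columns of H_eq:
r_j = h_j − Σ_{k<j} ⟨q_k, h_j⟩ q_k. -/
def rvec (H : Matrix (Fin 2) (Fin 4) ℂ) (j : Fin 16) : EuclideanSpace ℝ (Fin 16) :=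
  have : WellFoundedLT (Fin 16) := inferInstance
  InnerProductSpace.gramSchmidt ℝ (hcol H) j

/-- The Gram–Schmidt orthonormalization q_j = r_j / ‖r_j‖ (0-indexed). -/
def qvec (H : Matrix (Fin 2) (Fin 4) ℂ) (j : Fin 16) : EuclideanSpace ℝ (Fin 16) :=
  have : WellFoundedLT (Fin 16) := inferInstance
  InnerProductSpace.gramSchmidtNormed ℝ (hcol H) j

end MIMO3D

namespace MIMO3D

open Matrix ComplexConjugate

lemma inner_tildeVec (Y Z : Matrix (Fin 2) (Fin 4) ℂ) :
    ⟪tildeVec Y, tildeVec Z⟫_ℝ = ∑ c : Fin 4, ∑ r : Fin 2, ⟪Y r c, Z r c⟫_ℝ := by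
  simp only [PiLp.inner_apply, tildeVec, Fin.sum_univ_succ, Fin.sum_univ_zero, Complex.inner,
    Complex.mul_re, Complex.conj_re, Complex.conj_im, RCLike.inner_apply, Real.ringHom_apply,
    Fin.succ, Fin.isValue, Fin.coe_ofNat_eq_mod, Nat.reduceMod, Nat.reduceDiv, Nat.reduceAdd,
    Fin.reduceFinMk, Fin.zero_eta, Fin.mk_one, ↓reduceIte, Nat.one_ne_zero, mul_neg, sub_neg_eq_add]
  ring

lemma _root_.Complex.inner_mul_mul_left (a z w : ℂ) :
    ⟪a * z, a * w⟫_ℝ = ‖a‖ ^ 2 * ⟪z, w⟫_ℝ := by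
  simp only [Complex.inner, map_mul, Complex.sq_norm, Complex.normSq_apply, Complex.mul_re,
    Complex.mul_im, Complex.conj_re, Complex.conj_im]
  ring

lemma _root_.Complex.inner_eq_zero_of_im_eq_zero_of_re_eq_zero {z w : ℂ} (hz : z.im = 0)
    (hw : w.re = 0) : ⟪z, w⟫_ℝ = 0 := by
  simp [Complex.inner, hz, hw]

lemma inner_tildeVec_mul_diagonal_mul (H : Matrix (Fin 2) (Fin 4) ℂ) (κ w w' : Fin 4 → ℂ) :
    ⟪tildeVec (H * diagonal fun c => κ c * w c), tildeVec (H * diagonal fun c => κ c * w' c)⟫_ℝ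
      = ∑ c : Fin 4, ∑ r : Fin 2, ‖H r c * κ c‖ ^ 2 * ⟪w c, w' c⟫_ℝ := by
  simp only [inner_tildeVec, mul_diagonal, ← mul_assoc, Complex.inner_mul_mul_left]

lemma inner_tildeVec_mul_diagonal_mul_eq_zero (H : Matrix (Fin 2) (Fin 4) ℂ)
    (κ w w' : Fin 4 → ℂ) (hw : ∀ c, (w c).im = 0) (hw' : ∀ c, (w' c).re = 0) :
    ⟪tildeVec (H * diagonal fun c => κ c * w c),
      tildeVec (H * diagonal fun c => κ c * w' c)⟫_ℝ = 0 := by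
  simp [inner_tildeVec_mul_diagonal_mul, Complex.inner_eq_zero_of_im_eq_zero_of_re_eq_zero (hw _)
    (hw' _)]

def codewordDiag : Fin 4 → ℂ :=
  (Real.sqrt 5 : ℂ)⁻¹ • ![alpha, alphaBar, conj alpha, conj alphaBar]

def conjSign : Fin 4 → ℝ := ![1, 1, -1, -1]

def thetaDiag : Fin 4 → ℝ := ![goldenTheta, goldenThetaBar, goldenTheta, goldenThetaBar]

section hcol

variable (H : Matrix (Fin 2) (Fin 4) ℂ)

lemma hcol_zero : hcol H 0 = tildeVec (H * diagonal fun c => codewordDiag c * 1) := by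
  rw [hcol]; congr 2
  ext i j
  fin_cases i <;> fin_cases j <;> simp [codeword, sOfReal, codewordDiag, Fin.ext_iff]

lemma hcol_one :
    hcol H 1 = tildeVec (H * diagonal fun c => codewordDiag c * (conjSign c * Complex.I)) := by
  rw [hcol]; congr 2
  ext i j
  fin_cases i <;> fin_cases j <;> simp [codeword, sOfReal, codewordDiag, conjSign, Fin.ext_iff] <;>
    ring

lemma hcol_two : hcol H 2 = tildeVec (H * diagonal fun c => codewordDiag c * thetaDiag c) := by
  rw [hcol]; congr 2
  ext i j
  fin_cases i <;> fin_cases j <;> simp [codeword, sOfReal, codewordDiag, thetaDiag, Fin.ext_iff] <;>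
    ring

lemma hcol_three : hcol H 3 = tildeVec (H * diagonal fun c =>
    codewordDiag c * (thetaDiag c * conjSign c * Complex.I)) := by
  rw [hcol]; congr 2
  ext i j
  fin_cases i <;> fin_cases j <;>
    simp [codeword, sOfReal, codewordDiag, thetaDiag, conjSign, Fin.ext_iff] <;> ring

end hcol

end MIMO3D

open MIMO3D

/-- The first four columns of the equivalent channel matrix of the
3D MIMO code satisfy ⟨h₁,h₂⟩ = ⟨h₁,h₄⟩ = ⟨h₂,h₃⟩ = ⟨h₃,h₄⟩ = 0 (0-indexed here:
h₁,…,h₄ of the paper are `hcol H 0`,…,`hcol H 3`), for every channel matrix H. -/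
theorem stmt0 (H : Matrix (Fin 2) (Fin 4) ℂ) :
    ⟪hcol H 0, hcol H 1⟫_ℝ = 0 ∧ ⟪hcol H 0, hcol H 3⟫_ℝ = 0 ∧
    ⟪hcol H 1, hcol H 2⟫_ℝ = 0 ∧ ⟪hcol H 2, hcol H 3⟫_ℝ = 0 := by
  rw [real_inner_comm (hcol H 2), hcol_zero, hcol_one, hcol_two, hcol_three]
  refine ⟨?_, ?_, ?_, ?_⟩ <;>
    exact inner_tildeVec_mul_diagonal_mul_eq_zero H _ _ _ (by simp) (by simp)
end
end

section
/- In the QR decomposition H_eq = QR of the equivalent channel matrix of the 3D MIMO code, the second diagonal 4×4 block R_22 of R has the same zero pattern as R_11: ⟨q_5,h_6⟩ = ⟨q_5,h_8⟩ = ⟨q_6,h_7⟩ = ⟨q_7,h_8⟩ = 0. -/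
noncomputable section

open scoped InnerProductSpace

/-!
Write `J` for the real form of `Y ↦ Y · diag(i, i, -i, -i)` on `ṽ(Y)` and `M` for the real form
of `Y ↦ Y · diag(θ̄, θ, θ̄, θ)`. Since the first two columns of `X(s)` are `ℂ`-linear and the last
two antilinear in `s`, `h_{2k} = J h_{2k-1}`; the golden structure of the code gives
`h_3 = h_1 - M h_1` and `h_7 = M h_5`. Here `J` is skew-adjoint with `J² = -1`, and `M` is
self-adjoint, commutes with `J` and satisfies `M² = M + 1`, so `JM` is skew-adjoint too and
`span(h_1, …, h_4)` is invariant under `J` and `M`, `span(h_1, …, h_6)` under `J`.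

If a skew-adjoint `T` leaves `V_n = span(h_k : k < n)` invariant, then `r_n ⟂ T h_n`, because
`h_n - r_n ∈ V_n` and `⟨r_n, T r_n⟩ = 0`; if moreover `h_{n+1} = T h_n`, then `r_{n+1} = T r_n`.
With `T = J` and `T = JM` this gives `⟨r_5, h_6⟩ = ⟨r_5, h_8⟩ = ⟨r_7, h_8⟩ = 0`, and
`⟨r_6, h_7⟩ = ⟨J r_5, h_7⟩ = -⟨r_5, h_8⟩ = 0`.
-/

open Submodule InnerProductSpace

theorem Module.End.span_mem_invtSubmodule {R M : Type*} [Semiring R] [AddCommMonoid M]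
    [Module R M] {T : Module.End R M} {s : Set M} (h : ∀ x ∈ s, T x ∈ span R s) :
    span R s ∈ T.invtSubmodule := by
  rw [Module.End.mem_invtSubmodule_iff_map_le, Submodule.map_span, span_le]
  rintro _ ⟨x, hx, rfl⟩
  exact h x hx

section SkewGramSchmidt

variable {E : Type*} [NormedAddCommGroup E] [InnerProductSpace ℝ E]

def LinearMap.IsSkewSymmetric (T : E →ₗ[ℝ] E) : Prop :=
  ∀ x y, ⟪T x, y⟫_ℝ = -⟪x, T y⟫_ℝ

namespace LinearMap.IsSkewSymmetric

variable {T : E →ₗ[ℝ] E}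

theorem inner_map_self_eq_zero (hT : T.IsSkewSymmetric) (x : E) : ⟪x, T x⟫_ℝ = 0 := by
  have := hT x x
  rw [real_inner_comm] at this
  linarith

theorem comp_of_commute {S : E →ₗ[ℝ] E} (hT : T.IsSkewSymmetric) (hS : S.IsSymmetric)
    (hTS : T ∘ₗ S = S ∘ₗ T) : (T ∘ₗ S).IsSkewSymmetric := fun x y => by
  calc ⟪T (S x), y⟫_ℝ = -⟪S x, T y⟫_ℝ := hT _ _
    _ = -⟪x, S (T y)⟫_ℝ := by rw [hS]
    _ = -⟪x, T (S y)⟫_ℝ := by rw [← LinearMap.comp_apply S T, ← hTS, LinearMap.comp_apply]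

end LinearMap.IsSkewSymmetric

variable {ι : Type*} [LinearOrder ι] [LocallyFiniteOrderBot ι] [WellFoundedLT ι]
  (f : ι → E) {T : Module.End ℝ E}

theorem inner_gramSchmidt_eq_zero_of_mem_span_Iio {n : ι} {v : E}
    (hv : v ∈ span ℝ (f '' Set.Iio n)) : ⟪gramSchmidt ℝ f n, v⟫_ℝ = 0 := by
  have hle : span ℝ (f '' Set.Iio n) ≤ (ℝ ∙ gramSchmidt ℝ f n)ᗮ := by
    refine span_le.2 ?_
    rintro _ ⟨i, hi, rfl⟩
    exact mem_orthogonal_singleton_iff_inner_right.2 (gramSchmidt_inv_triangular ℝ f hi)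
  exact mem_orthogonal_singleton_iff_inner_right.1 (hle hv)

theorem sub_gramSchmidt_mem_span_Iio (n : ι) :
    f n - gramSchmidt ℝ f n ∈ span ℝ (f '' Set.Iio n) := by
  rw [gramSchmidt_def ℝ f n, sub_sub_cancel, ← span_gramSchmidt_Iio ℝ]
  refine sum_mem fun i hi => ?_
  refine span_le.2 ?_ (starProjection_apply_mem _ _)
  rintro _ rfl
  exact subset_span ⟨i, Finset.mem_Iio.1 hi, rfl⟩

theorem inner_gramSchmidt_map_self_eq_zero (hT : T.IsSkewSymmetric) {n : ι}
    (hV : span ℝ (f '' Set.Iio n) ∈ T.invtSubmodule) :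
    ⟪gramSchmidt ℝ f n, T (f n)⟫_ℝ = 0 := by
  have hw := sub_gramSchmidt_mem_span_Iio f n
  calc ⟪gramSchmidt ℝ f n, T (f n)⟫_ℝ
      = ⟪gramSchmidt ℝ f n, T (gramSchmidt ℝ f n)⟫_ℝ
        + ⟪gramSchmidt ℝ f n, T (f n - gramSchmidt ℝ f n)⟫_ℝ := by
          rw [← inner_add_right, ← map_add, add_sub_cancel]
    _ = 0 := by
      rw [hT.inner_map_self_eq_zero, inner_gramSchmidt_eq_zero_of_mem_span_Iio f (hV hw), add_zero]

theorem gramSchmidt_eq_map_of_isSkewSymmetric (hT : T.IsSkewSymmetric) {j k : ι}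
    (hjk : Set.Iio k = Set.Iic j) (hV : span ℝ (f '' Set.Iio j) ∈ T.invtSubmodule)
    (hf : f k = T (f j)) : gramSchmidt ℝ f k = T (gramSchmidt ℝ f j) := by
  have hmono : span ℝ (f '' Set.Iio j) ≤ span ℝ (f '' Set.Iio k) :=
    span_mono (Set.image_mono (hjk ▸ Set.Iio_subset_Iic_self))
  have hd_mem : T (gramSchmidt ℝ f j) - gramSchmidt ℝ f k ∈ span ℝ (f '' Set.Iio k) := by
    have : T (gramSchmidt ℝ f j) - gramSchmidt ℝ f k
        = (f k - gramSchmidt ℝ f k) - T (f j - gramSchmidt ℝ f j) := by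
      rw [map_sub, ← hf]; abel
    rw [this]
    exact sub_mem (sub_gramSchmidt_mem_span_Iio f k)
      (hmono (hV (sub_gramSchmidt_mem_span_Iio f j)))
  have hT_orth : ∀ i ≤ j, ⟪T (gramSchmidt ℝ f j), f i⟫_ℝ = 0 := by
    intro i hi
    rw [hT, neg_eq_zero]
    rcases hi.lt_or_eq with hi | rfl
    · exact inner_gramSchmidt_eq_zero_of_mem_span_Iio f (hV (subset_span ⟨i, hi, rfl⟩))
    · exact inner_gramSchmidt_map_self_eq_zero f hT hV
  have hd_orth :
      span ℝ (f '' Set.Iio k) ≤ (ℝ ∙ (T (gramSchmidt ℝ f j) - gramSchmidt ℝ f k))ᗮ := by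
    refine span_le.2 ?_
    rintro _ ⟨i, hi, rfl⟩
    have hij : i ∈ Set.Iic j := hjk ▸ hi
    rw [SetLike.mem_coe, mem_orthogonal_singleton_iff_inner_right, inner_sub_left,
      hT_orth i hij, gramSchmidt_inv_triangular ℝ f hi, sub_zero]
  have := mem_orthogonal_singleton_iff_inner_right.1 (hd_orth hd_mem)
  exact (sub_eq_zero.1 (inner_self_eq_zero.1 this)).symm

theorem inner_gramSchmidtNormed_eq_zero {n : ι} {v : E} (h : ⟪gramSchmidt ℝ f n, v⟫_ℝ = 0) :
    ⟪gramSchmidtNormed ℝ f n, v⟫_ℝ = 0 := by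
  rw [gramSchmidtNormed, real_inner_smul_left, h, mul_zero]

end SkewGramSchmidt

namespace MIMO3D

open Matrix

local notation "E16" => EuclideanSpace ℝ (Fin 16)

def pairSwap (m : Fin 16) : Fin 16 :=
  ⟨if (m : ℕ) % 2 = 0 then m + 1 else m - 1, by have := m.isLt; split <;> omega⟩

def rotSign : Fin 4 → ℝ := ![1, 1, -1, -1]

def rotCoef (m : Fin 16) : ℝ :=
  (if (m : ℕ) % 2 = 0 then -1 else 1) * rotSign ⟨m / 4, by omega⟩

def rotI : Module.End ℝ E16 where
  toFun v := WithLp.toLp 2 fun m => rotCoef m * v (pairSwap m)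
  map_add' x y := by ext m; simp only [PiLp.add_apply]; ring
  map_smul' c x := by ext m; simp only [PiLp.smul_apply, smul_eq_mul, RingHom.id_apply]; ring

def goldenWeight : Fin 4 → ℝ := ![goldenThetaBar, goldenTheta, goldenThetaBar, goldenTheta]

def goldenScale : Module.End ℝ E16 where
  toFun v := WithLp.toLp 2 fun m => goldenWeight ⟨m / 4, by omega⟩ * v m
  map_add' x y := by ext m; simp only [PiLp.add_apply]; ring
  map_smul' c x := by ext m; simp only [PiLp.smul_apply, smul_eq_mul, RingHom.id_apply]; ring

theorem pairSwap_pairSwap (m : Fin 16) : pairSwap (pairSwap m) = m := by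
  ext; simp only [pairSwap]; split_ifs <;> omega

theorem rotCoef_pairSwap (m : Fin 16) : rotCoef (pairSwap m) = -rotCoef m := by
  fin_cases m <;> norm_num [rotCoef, pairSwap]

theorem rotCoef_mul_self (m : Fin 16) : rotCoef m * rotCoef m = 1 := by
  fin_cases m <;> norm_num [rotCoef, rotSign]

theorem goldenWeight_pairSwap (m : Fin 16) :
    goldenWeight ⟨pairSwap m / 4, by omega⟩ = goldenWeight ⟨m / 4, by omega⟩ := by
  congr 2; simp only [pairSwap]; split_ifs <;> omega

theorem tildeVec_sub (Y Z : Matrix (Fin 2) (Fin 4) ℂ) :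
    tildeVec (Y - Z) = tildeVec Y - tildeVec Z := by
  ext m
  simp only [tildeVec, PiLp.sub_apply, PiLp.toLp_apply, Matrix.sub_apply]
  split_ifs <;> simp

theorem tildeVec_mul_goldenWeight (Y : Matrix (Fin 2) (Fin 4) ℂ) :
    tildeVec (Y * diagonal (fun c => (goldenWeight c : ℂ))) = goldenScale (tildeVec Y) := by
  ext m
  simp only [tildeVec, goldenScale, LinearMap.coe_mk, AddHom.coe_mk, PiLp.toLp_apply,
    mul_diagonal]
  split_ifs <;>
    simp only [Complex.mul_re, Complex.mul_im, Complex.ofReal_re, Complex.ofReal_im] <;> ring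

theorem tildeVec_mul_rotSign (Y : Matrix (Fin 2) (Fin 4) ℂ) :
    tildeVec (Y * diagonal (fun c => (rotSign c : ℂ) * Complex.I)) = rotI (tildeVec Y) := by
  ext m
  fin_cases m <;> simp [tildeVec, rotI, rotCoef, rotSign, pairSwap, mul_diagonal]

theorem rotI_rotI (v : E16) : rotI (rotI v) = -v := by
  ext m
  simp only [rotI, LinearMap.coe_mk, AddHom.coe_mk, PiLp.toLp_apply, PiLp.neg_apply,
    rotCoef_pairSwap, pairSwap_pairSwap]
  linear_combination (-v m) * rotCoef_mul_self m

theorem rotI_isSkewSymmetric : rotI.IsSkewSymmetric := fun x y => by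
  have hσ : Function.Involutive pairSwap := pairSwap_pairSwap
  simp only [PiLp.inner_apply, RCLike.inner_apply, conj_trivial, rotI, LinearMap.coe_mk,
    AddHom.coe_mk]
  rw [← Equiv.sum_comp (hσ.toPerm _), ← Finset.sum_neg_distrib]
  refine Finset.sum_congr rfl fun m _ => ?_
  rw [Function.Involutive.coe_toPerm, pairSwap_pairSwap, rotCoef_pairSwap]
  ring

theorem goldenScale_isSymmetric : goldenScale.IsSymmetric := fun x y => by
  simp only [PiLp.inner_apply, RCLike.inner_apply, conj_trivial, goldenScale, LinearMap.coe_mk,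
    AddHom.coe_mk]
  exact Finset.sum_congr rfl fun m _ => by ring

theorem rotI_comp_goldenScale : rotI ∘ₗ goldenScale = goldenScale ∘ₗ rotI := by
  ext v m
  simp only [rotI, goldenScale, LinearMap.coe_comp, Function.comp_apply, LinearMap.coe_mk,
    AddHom.coe_mk, PiLp.toLp_apply, goldenWeight_pairSwap]
  ring

theorem goldenTheta_mul_self : goldenTheta * goldenTheta = goldenTheta + 1 := by
  have := Real.mul_self_sqrt (show (0 : ℝ) ≤ 5 by norm_num)
  unfold goldenTheta
  linear_combination this / 4

theorem goldenThetaBar_mul_self : goldenThetaBar * goldenThetaBar = goldenThetaBar + 1 := by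
  unfold goldenThetaBar
  linear_combination goldenTheta_mul_self

theorem goldenScale_goldenScale (v : E16) : goldenScale (goldenScale v) = goldenScale v + v := by
  have hw : ∀ c, goldenWeight c * goldenWeight c = goldenWeight c + 1 := by
    intro c
    fin_cases c
    exacts [goldenThetaBar_mul_self, goldenTheta_mul_self, goldenThetaBar_mul_self,
      goldenTheta_mul_self]
  ext m
  simp only [goldenScale, LinearMap.coe_mk, AddHom.coe_mk, PiLp.toLp_apply, PiLp.add_apply]
  linear_combination v m * hw _

theorem sOfReal_single_even (k : Fin 8) :
    sOfReal (Pi.single ⟨2 * k, by omega⟩ 1) = Pi.single k 1 := by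
  ext l
  simp only [sOfReal, Pi.single_apply, Fin.ext_iff]
  split_ifs <;> first | omega | simp

theorem sOfReal_single_odd (k : Fin 8) :
    sOfReal (Pi.single ⟨2 * k + 1, by omega⟩ 1) = Complex.I • Pi.single k 1 := by
  ext l
  simp only [sOfReal, Pi.single_apply, Fin.ext_iff, Pi.smul_apply, smul_eq_mul]
  split_ifs <;> first | omega | simp

theorem codeword_I_smul (s : Fin 8 → ℂ) :
    codeword (Complex.I • s) = codeword s * diagonal (fun c => (rotSign c : ℂ) * Complex.I) := by
  ext a c
  rw [mul_diagonal]
  fin_cases a <;> fin_cases c <;> simp [codeword, rotSign] <;> ring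

theorem codeword_single_one : codeword (Pi.single 1 1) = codeword (Pi.single 0 1)
    - codeword (Pi.single 0 1) * diagonal (fun c => (goldenWeight c : ℂ)) := by
  ext a c
  rw [Matrix.sub_apply, mul_diagonal]
  fin_cases a <;> fin_cases c <;> simp [codeword, goldenWeight, goldenThetaBar] <;> ring

theorem codeword_single_three : codeword (Pi.single 3 1) =
    codeword (Pi.single 2 1) * diagonal (fun c => (goldenWeight c : ℂ)) := by
  ext a c
  rw [mul_diagonal]
  fin_cases a <;> fin_cases c <;> simp [codeword, goldenWeight, goldenThetaBar] <;> ring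

variable (H : Matrix (Fin 2) (Fin 4) ℂ)

theorem hcol_even (k : Fin 8) :
    hcol H ⟨2 * k, by omega⟩ = tildeVec (H * codeword (Pi.single k 1)) := by
  rw [hcol, sOfReal_single_even]

theorem hcol_odd (k : Fin 8) :
    hcol H ⟨2 * k + 1, by omega⟩ = rotI (hcol H ⟨2 * k, by omega⟩) := by
  rw [hcol, sOfReal_single_odd, codeword_I_smul, ← Matrix.mul_assoc, tildeVec_mul_rotSign,
    hcol_even]

theorem hcol_two_s3 : hcol H 2 = hcol H 0 - goldenScale (hcol H 0) := by
  rw [show (2 : Fin 16) = ⟨2 * (1 : Fin 8), by omega⟩ from rfl,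
    show (0 : Fin 16) = ⟨2 * (0 : Fin 8), by omega⟩ from rfl, hcol_even, hcol_even,
    codeword_single_one, Matrix.mul_sub, tildeVec_sub, ← Matrix.mul_assoc,
    tildeVec_mul_goldenWeight]

theorem hcol_six : hcol H 6 = goldenScale (hcol H 4) := by
  rw [show (6 : Fin 16) = ⟨2 * (3 : Fin 8), by omega⟩ from rfl,
    show (4 : Fin 16) = ⟨2 * (2 : Fin 8), by omega⟩ from rfl, hcol_even, hcol_even,
    codeword_single_three, ← Matrix.mul_assoc, tildeVec_mul_goldenWeight]

theorem span_hcol_Iio_mem_invtSubmodule_rotI {j : Fin 16} (hj : (j : ℕ) % 2 = 0) :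
    span ℝ (hcol H '' Set.Iio j) ∈ rotI.invtSubmodule := by
  refine Module.End.span_mem_invtSubmodule ?_
  rintro _ ⟨i, hi, rfl⟩
  have hij : (i : ℕ) < j := hi
  have mem : ∀ i' : Fin 16, (i' : ℕ) < j → hcol H i' ∈ span ℝ (hcol H '' Set.Iio j) :=
    fun i' hi' => subset_span ⟨i', hi', rfl⟩
  let k : Fin 8 := ⟨i / 2, by omega⟩
  by_cases hi2 : (i : ℕ) % 2 = 0
  · rw [show i = ⟨2 * k, by omega⟩ from Fin.ext (by simp only [k]; omega), ← hcol_odd]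
    exact mem _ (by simp only [k]; omega)
  · rw [show i = ⟨2 * k + 1, by omega⟩ from Fin.ext (by simp only [k]; omega), hcol_odd,
      rotI_rotI]
    exact neg_mem (mem _ (by simp only [k]; omega))

theorem span_hcol_Iio_four_mem_invtSubmodule_goldenScale :
    span ℝ (hcol H '' Set.Iio 4) ∈ goldenScale.invtSubmodule := by
  have h1 : hcol H 1 = rotI (hcol H 0) := hcol_odd H 0
  have h3 : hcol H 3 = rotI (hcol H 2) := hcol_odd H 1
  have hM0 : goldenScale (hcol H 0) = hcol H 0 - hcol H 2 := by rw [hcol_two_s3]; abel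
  have hM2 : goldenScale (hcol H 2) = -hcol H 0 := by
    rw [hcol_two_s3, map_sub, goldenScale_goldenScale]; abel
  have hM1 : goldenScale (hcol H 1) = hcol H 1 - hcol H 3 := by
    rw [h1, h3, ← LinearMap.comp_apply, ← rotI_comp_goldenScale, LinearMap.comp_apply, hM0,
      map_sub]
  have hM3 : goldenScale (hcol H 3) = -hcol H 1 := by
    rw [h1, h3, ← LinearMap.comp_apply, ← rotI_comp_goldenScale, LinearMap.comp_apply, hM2,
      map_neg]
  have mem : ∀ i : Fin 16, i < 4 → hcol H i ∈ span ℝ (hcol H '' Set.Iio 4) :=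
    fun i hi => subset_span ⟨i, hi, rfl⟩
  refine Module.End.span_mem_invtSubmodule ?_
  rintro _ ⟨i, hi, rfl⟩
  obtain rfl | rfl | rfl | rfl : i = 0 ∨ i = 1 ∨ i = 2 ∨ i = 3 := by
    simp only [Set.mem_Iio] at hi; omega
  · rw [hM0]; exact sub_mem (mem 0 (by decide)) (mem 2 (by decide))
  · rw [hM1]; exact sub_mem (mem 1 (by decide)) (mem 3 (by decide))
  · rw [hM2]; exact neg_mem (mem 0 (by decide))
  · rw [hM3]; exact neg_mem (mem 1 (by decide))

end MIMO3D

open MIMO3D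

theorem stmt3_general (H : Matrix (Fin 2) (Fin 4) ℂ) :
    ⟪qvec H 4, hcol H 5⟫_ℝ = 0 ∧ ⟪qvec H 4, hcol H 7⟫_ℝ = 0 ∧
    ⟪qvec H 5, hcol H 6⟫_ℝ = 0 ∧ ⟪qvec H 6, hcol H 7⟫_ℝ = 0 := by
  have h5 : hcol H 5 = rotI (hcol H 4) := hcol_odd H 2
  have h7 : hcol H 7 = rotI (hcol H 6) := hcol_odd H 3
  have hV4 := span_hcol_Iio_mem_invtSubmodule_rotI H (j := 4) rfl
  have hV6 := span_hcol_Iio_mem_invtSubmodule_rotI H (j := 6) rfl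
  have hA : ⟪gramSchmidt ℝ (hcol H) 4, hcol H 5⟫_ℝ = 0 := by
    rw [h5]; exact inner_gramSchmidt_map_self_eq_zero _ rotI_isSkewSymmetric hV4
  have hB : ⟪gramSchmidt ℝ (hcol H) 4, hcol H 7⟫_ℝ = 0 := by
    rw [h7, hcol_six]
    exact inner_gramSchmidt_map_self_eq_zero _
      (rotI_isSkewSymmetric.comp_of_commute goldenScale_isSymmetric rotI_comp_goldenScale)
      fun v hv => hV4 (span_hcol_Iio_four_mem_invtSubmodule_goldenScale H hv)
  have hC : ⟪gramSchmidt ℝ (hcol H) 5, hcol H 6⟫_ℝ = 0 := by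
    have h45 : Set.Iio (5 : Fin 16) = Set.Iic 4 := Set.ext fun i => by
      simp only [Set.mem_Iio, Set.mem_Iic]; omega
    rw [gramSchmidt_eq_map_of_isSkewSymmetric _ rotI_isSkewSymmetric h45 hV4 h5,
      rotI_isSkewSymmetric, ← h7, hB, neg_zero]
  have hD : ⟪gramSchmidt ℝ (hcol H) 6, hcol H 7⟫_ℝ = 0 := by
    rw [h7]; exact inner_gramSchmidt_map_self_eq_zero _ rotI_isSkewSymmetric hV6
  exact ⟨inner_gramSchmidtNormed_eq_zero _ hA, inner_gramSchmidtNormed_eq_zero _ hB,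
    inner_gramSchmidtNormed_eq_zero _ hC, inner_gramSchmidtNormed_eq_zero _ hD⟩

/-- The second diagonal block R₂₂ of R has the same zero pattern as
R₁₁: ⟨q₅,h₆⟩ = ⟨q₅,h₈⟩ = ⟨q₆,h₇⟩ = ⟨q₇,h₈⟩ = 0 (paper's 1-based indices; 0-indexed
here as q₄,…,q₇ and h₄,…,h₇). -/
theorem stmt3 (H : Matrix (Fin 2) (Fin 4) ℂ) (hLI : LinearIndependent ℝ (hcol H)) :
    ⟪qvec H 4, hcol H 5⟫_ℝ = 0 ∧ ⟪qvec H 4, hcol H 7⟫_ℝ = 0 ∧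
    ⟪qvec H 5, hcol H 6⟫_ℝ = 0 ∧ ⟪qvec H 6, hcol H 7⟫_ℝ = 0 :=
  stmt3_general H
end
end

section
/- In the QR decomposition H_eq = QR of the equivalent channel matrix of the 3D MIMO code, the following pairing identities hold: ⟨q_j,h_k⟩ = ⟨q_{j+1},h_{k+1}⟩ for all j ∈ {5,7} and k ∈ {9,11}. -/
noncomputable section

open scoped InnerProductSpace

open MIMO3D
/-!
Multiplying all symbols by `i` multiplies the first two columns of `X(s)` by `i` and, the last
two columns being conjugate-linear in `s`, those by `-i`. Realified, this is an orthogonal map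
`J` of `ℝ¹⁶` with `J² = -1` and `h_{2c+2} = J h_{2c+1}`. Since `J` is skew-adjoint and the span
of `h_1, …, h_{2c}` is `J`-invariant, the Gram–Schmidt process commutes with `J` on each pair:
`q_{2c+2} = J q_{2c+1}`. Hence `⟪q_{j+1}, h_{k+1}⟫ = ⟪J q_j, J h_k⟫ = ⟪q_j, h_k⟫` for odd `j, k`.
-/

open Submodule

section SignedReindex

variable {ι : Type*}

def signedReindex (σ : ι → ι) (ε : ι → ℝ) :
    EuclideanSpace ℝ ι →ₗ[ℝ] EuclideanSpace ℝ ι where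
  toFun v := WithLp.toLp 2 fun i => ε i * v (σ i)
  map_add' x y := by ext i; simp [mul_add]
  map_smul' c x := by ext i; simp [mul_left_comm]

@[simp]
theorem signedReindex_apply (σ : ι → ι) (ε : ι → ℝ) (v : EuclideanSpace ℝ ι) (i : ι) :
    signedReindex σ ε v i = ε i * v (σ i) := rfl

theorem inner_signedReindex_left [Fintype ι] {σ : ι → ι} {ε : ι → ℝ}
    (hσ : Function.Involutive σ) (hε : ∀ i, ε (σ i) = -ε i) (x y : EuclideanSpace ℝ ι) :
    ⟪signedReindex σ ε x, y⟫_ℝ = -⟪x, signedReindex σ ε y⟫_ℝ := by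
  simp only [PiLp.inner_apply, signedReindex_apply, RCLike.inner_apply, conj_trivial]
  rw [← Equiv.sum_comp hσ.toPerm, ← Finset.sum_neg_distrib]
  refine Finset.sum_congr rfl fun i _ => ?_
  simp only [Function.Involutive.coe_toPerm, hσ i, hε]
  ring

theorem signedReindex_signedReindex {σ : ι → ι} {ε : ι → ℝ} (hσ : Function.Involutive σ)
    (hε : ∀ i, ε (σ i) = -ε i) (hε_sq : ∀ i, ε i ^ 2 = 1) (v : EuclideanSpace ℝ ι) :
    signedReindex σ ε (signedReindex σ ε v) = -v := by
  ext i
  simp only [signedReindex_apply, hσ i, hε, PiLp.neg_apply]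
  linear_combination (-v i) * hε_sq i

end SignedReindex

section SkewSquareNegOne

variable {E : Type*} [NormedAddCommGroup E] [InnerProductSpace ℝ E] {J : E →ₗ[ℝ] E}

theorem inner_map_map_of_skew (hJ : ∀ x y, ⟪J x, y⟫_ℝ = -⟪x, J y⟫_ℝ)
    (hJJ : ∀ x, J (J x) = -x) (x y : E) : ⟪J x, J y⟫_ℝ = ⟪x, y⟫_ℝ := by
  rw [hJ, hJJ, inner_neg_right, neg_neg]

theorem norm_map_of_skew (hJ : ∀ x y, ⟪J x, y⟫_ℝ = -⟪x, J y⟫_ℝ)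
    (hJJ : ∀ x, J (J x) = -x) (x : E) : ‖J x‖ = ‖x‖ := by
  rw [norm_eq_sqrt_real_inner, norm_eq_sqrt_real_inner, inner_map_map_of_skew hJ hJJ]

end SkewSquareNegOne

theorem Fin.val_add_one_of_even {n : ℕ} [NeZero n] (hn : Even n) {a : Fin n}
    (ha : Even (a : ℕ)) : ((a + 1 : Fin n) : ℕ) = a + 1 := by
  refine Fin.val_add_one_of_lt' ?_
  obtain ⟨r, hr⟩ := hn
  obtain ⟨s, hs⟩ := ha
  omega

theorem apply_mem_span_image_Iio_of_even {R M : Type*} [Ring R] [AddCommGroup M] [Module R M]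
    {n : ℕ} [NeZero n] (hn : Even n) {f : Fin n → M} (J : M →ₗ[R] M) (hJJ : ∀ x, J (J x) = -x)
    (hpair : ∀ i : Fin n, Even (i : ℕ) → f (i + 1) = J (f i))
    {a : Fin n} (ha : Even (a : ℕ)) (i : Fin n) (hi : i < a) :
    J (f i) ∈ span R (f '' Set.Iio a) := by
  rw [Fin.lt_def] at hi
  rcases Nat.even_or_odd (i : ℕ) with hi_even | hi_odd
  · have hsucc : i + 1 < a := by
      rw [Fin.lt_def, Fin.val_add_one_of_even hn hi_even]
      obtain ⟨r, hr⟩ := ha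
      obtain ⟨s, hs⟩ := hi_even
      omega
    rw [← hpair i hi_even]
    exact subset_span ⟨_, hsucc, rfl⟩
  · have hi0 : i ≠ 0 := by rintro rfl; simp at hi_odd
    have hprev : Even ((i - 1 : Fin n) : ℕ) := by
      rw [Fin.val_sub_one_of_ne_zero hi0]
      obtain ⟨r, hr⟩ := hi_odd
      exact ⟨r, by omega⟩
    have hprev_lt : i - 1 < a := by
      rw [Fin.lt_def, Fin.val_sub_one_of_ne_zero hi0]
      omega
    rw [← sub_add_cancel i 1, hpair _ hprev, hJJ]
    exact neg_mem (subset_span ⟨_, hprev_lt, rfl⟩)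

namespace InnerProductSpace

section GramSchmidt

variable {ι : Type*} [LinearOrder ι] [LocallyFiniteOrderBot ι] [WellFoundedLT ι]

section RCLike

variable {𝕜 E : Type*} [RCLike 𝕜] [NormedAddCommGroup E] [InnerProductSpace 𝕜 E]

theorem sub_gramSchmidt_mem_span (f : ι → E) (n : ι) :
    f n - gramSchmidt 𝕜 f n ∈ span 𝕜 (f '' Set.Iio n) := by
  rw [← span_gramSchmidt_Iio, gramSchmidt_def, sub_sub_cancel]
  refine Submodule.sum_mem _ fun i hi => ?_
  refine span_mono (Set.singleton_subset_iff.2 ?_) (starProjection_apply_mem _ _)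
  exact Set.mem_image_of_mem _ (Finset.mem_Iio.1 hi)

theorem gramSchmidt_mem_orthogonal_span (f : ι → E) (n : ι) :
    gramSchmidt 𝕜 f n ∈ (span 𝕜 (f '' Set.Iio n))ᗮ := by
  rw [← span_gramSchmidt_Iio]
  have : span 𝕜 (gramSchmidt 𝕜 f '' Set.Iio n) ≤ (𝕜 ∙ gramSchmidt 𝕜 f n)ᗮ := by
    rw [span_le]
    rintro _ ⟨i, hi, rfl⟩
    exact mem_orthogonal_singleton_iff_inner_left.2 (gramSchmidt_orthogonal 𝕜 f (ne_of_lt hi))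
  exact fun u hu => mem_orthogonal_singleton_iff_inner_left.1 (this hu)

theorem gramSchmidt_eq_of_sub_mem_span {f : ι → E} {n : ι} {v : E}
    (hsub : f n - v ∈ span 𝕜 (f '' Set.Iio n)) (horth : v ∈ (span 𝕜 (f '' Set.Iio n))ᗮ) :
    gramSchmidt 𝕜 f n = v := by
  set K := span 𝕜 (f '' Set.Iio n)
  have hK : gramSchmidt 𝕜 f n - v ∈ K := by
    simpa using K.sub_mem hsub (sub_gramSchmidt_mem_span f n)
  have hKperp : gramSchmidt 𝕜 f n - v ∈ Kᗮ :=
    Kᗮ.sub_mem (gramSchmidt_mem_orthogonal_span f n) horth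
  exact sub_eq_zero.1 (inner_self_eq_zero.1 (hKperp _ hK))

end RCLike

variable {E : Type*} [NormedAddCommGroup E] [InnerProductSpace ℝ E]

theorem gramSchmidt_eq_apply_of_covBy {f : ι → E} (J : E →ₗ[ℝ] E)
    (hJ : ∀ x y, ⟪J x, y⟫_ℝ = -⟪x, J y⟫_ℝ) {a b : ι} (hab : a ⋖ b) (hf : f b = J (f a))
    (hinv : ∀ i < a, J (f i) ∈ span ℝ (f '' Set.Iio a)) :
    gramSchmidt ℝ f b = J (gramSchmidt ℝ f a) := by
  set K := span ℝ (f '' Set.Iio a)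
  set g := gramSchmidt ℝ f a
  have hJK : ∀ x ∈ K, J x ∈ K := by
    suffices K ≤ K.comap J from fun x hx => this hx
    rw [span_le]
    rintro _ ⟨i, hi, rfl⟩
    exact hinv i hi
  have hg : g ∈ Kᗮ := gramSchmidt_mem_orthogonal_span f a
  have hres : f a - g ∈ K := sub_gramSchmidt_mem_span f a
  have hspan : span ℝ (f '' Set.Iio b) = ℝ ∙ f a ⊔ K := by
    rw [hab.Iio_eq, ← Set.Iio_insert, Set.image_insert_eq, span_insert]
  have hK_perp : ∀ u ∈ K, ⟪u, J g⟫_ℝ = 0 := fun u hu => by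
    rw [← neg_eq_zero, ← hJ]
    exact hg _ (hJK u hu)
  refine gramSchmidt_eq_of_sub_mem_span ?_ ?_
  · rw [hf, ← map_sub, hspan]
    exact mem_sup_right (hJK _ hres)
  · rw [hspan, ← inf_orthogonal]
    refine ⟨mem_orthogonal_singleton_iff_inner_right.2 ?_, hK_perp⟩
    have hg_Jg : ⟪g, J g⟫_ℝ = 0 := by
      have := hJ g g
      rw [real_inner_comm] at this
      linarith
    rw [← sub_add_cancel (f a) g, inner_add_left, hK_perp _ hres, hg_Jg, add_zero]

end GramSchmidt

section EvenPairs

variable {E : Type*} [NormedAddCommGroup E] [InnerProductSpace ℝ E]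
variable {n : ℕ} [NeZero n] {f : Fin n → E} {J : E →ₗ[ℝ] E}

theorem gramSchmidt_add_one_of_even (hn : Even n) (hJ : ∀ x y, ⟪J x, y⟫_ℝ = -⟪x, J y⟫_ℝ)
    (hJJ : ∀ x, J (J x) = -x) (hpair : ∀ i : Fin n, Even (i : ℕ) → f (i + 1) = J (f i))
    {a : Fin n} (ha : Even (a : ℕ)) : gramSchmidt ℝ f (a + 1) = J (gramSchmidt ℝ f a) := by
  have hcov : a ⋖ a + 1 := by
    rw [Fin.covBy_iff, Fin.val_add_one_of_even hn ha]
    exact Order.covBy_add_one _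
  exact gramSchmidt_eq_apply_of_covBy J hJ hcov (hpair a ha)
    (apply_mem_span_image_Iio_of_even hn J hJJ hpair ha)

theorem gramSchmidtNormed_add_one_of_even (hn : Even n)
    (hJ : ∀ x y, ⟪J x, y⟫_ℝ = -⟪x, J y⟫_ℝ) (hJJ : ∀ x, J (J x) = -x)
    (hpair : ∀ i : Fin n, Even (i : ℕ) → f (i + 1) = J (f i)) {a : Fin n} (ha : Even (a : ℕ)) :
    gramSchmidtNormed ℝ f (a + 1) = J (gramSchmidtNormed ℝ f a) := by
  rw [gramSchmidtNormed, gramSchmidtNormed, gramSchmidt_add_one_of_even hn hJ hJJ hpair ha,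
    norm_map_of_skew hJ hJJ, map_smul]

end EvenPairs

end InnerProductSpace

namespace MIMO3D

def partner (m : Fin 16) : Fin 16 := if (m : ℕ) % 2 = 0 then m + 1 else m - 1

def rotationSign (m : Fin 16) : ℝ := if ((m : ℕ) < 8 ↔ (m : ℕ) % 2 = 1) then 1 else -1

theorem partner_involutive : Function.Involutive partner := by
  unfold Function.Involutive
  decide

theorem rotationSign_partner (m : Fin 16) : rotationSign (partner m) = -rotationSign m := by
  have key : ((partner m : ℕ) < 8 ↔ (partner m : ℕ) % 2 = 1) ↔
      ¬((m : ℕ) < 8 ↔ (m : ℕ) % 2 = 1) := by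
    revert m
    decide
  unfold rotationSign
  split_ifs <;> norm_num <;> tauto

theorem rotationSign_sq (m : Fin 16) : rotationSign m ^ 2 = 1 := by
  unfold rotationSign
  split_ifs <;> norm_num

/-- The realification of `Y ↦ Y * diagonal ![i, i, -i, -i]` under `tildeVec`: coordinates
`2c, 2c+1` carry the real and imaginary part of one entry, in column `c / 2` of `Y`. -/
def quarterTurn : EuclideanSpace ℝ (Fin 16) →ₗ[ℝ] EuclideanSpace ℝ (Fin 16) :=
  signedReindex partner rotationSign

theorem inner_quarterTurn_left (x y : EuclideanSpace ℝ (Fin 16)) :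
    ⟪quarterTurn x, y⟫_ℝ = -⟪x, quarterTurn y⟫_ℝ :=
  inner_signedReindex_left partner_involutive rotationSign_partner x y

theorem quarterTurn_quarterTurn (v : EuclideanSpace ℝ (Fin 16)) :
    quarterTurn (quarterTurn v) = -v :=
  signedReindex_signedReindex partner_involutive rotationSign_partner rotationSign_sq v

theorem tildeVec_mul_diagonal (Y : Matrix (Fin 2) (Fin 4) ℂ) :
    tildeVec (Y * Matrix.diagonal ![Complex.I, Complex.I, -Complex.I, -Complex.I]) =
      quarterTurn (tildeVec Y) := by
  ext m
  fin_cases m <;> simp [quarterTurn, tildeVec, rotationSign, partner, Matrix.mul_diagonal]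

theorem codeword_I_smul_s9 (s : Fin 8 → ℂ) :
    codeword (Complex.I • s) =
      codeword s * Matrix.diagonal ![Complex.I, Complex.I, -Complex.I, -Complex.I] := by
  ext i j
  fin_cases i <;> fin_cases j <;> simp [codeword, Matrix.mul_diagonal, Complex.conj_I] <;> ring

theorem sOfReal_single_add_one {i : Fin 16} (hi : Even (i : ℕ)) :
    sOfReal (Pi.single (i + 1) 1) = Complex.I • sOfReal (Pi.single i 1) := by
  obtain ⟨r, hr⟩ := hi
  have h1 : ((i + 1 : Fin 16) : ℕ) = i + 1 := Fin.val_add_one_of_lt' (by omega)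
  funext t
  simp only [sOfReal, Pi.single_apply, Pi.smul_apply, smul_eq_mul, Fin.ext_iff, h1]
  split_ifs <;> simp <;> omega

theorem hcol_add_one (H : Matrix (Fin 2) (Fin 4) ℂ) {i : Fin 16} (hi : Even (i : ℕ)) :
    hcol H (i + 1) = quarterTurn (hcol H i) := by
  rw [hcol, hcol, sOfReal_single_add_one hi, codeword_I_smul_s9, ← Matrix.mul_assoc,
    tildeVec_mul_diagonal]

theorem qvec_add_one (H : Matrix (Fin 2) (Fin 4) ℂ) {j : Fin 16} (hj : Even (j : ℕ)) :
    qvec H (j + 1) = quarterTurn (qvec H j) :=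
  InnerProductSpace.gramSchmidtNormed_add_one_of_even (by decide) inner_quarterTurn_left
    quarterTurn_quarterTurn (fun _ hi => hcol_add_one H hi) hj

end MIMO3D

theorem stmt9_general (H : Matrix (Fin 2) (Fin 4) ℂ)
    (j k : Fin 16) (hj : j = 4 ∨ j = 6) (hk : k = 8 ∨ k = 10) :
    ⟪qvec H j, hcol H k⟫_ℝ = ⟪qvec H (j + 1), hcol H (k + 1)⟫_ℝ := by
  have hj_even : Even (j : ℕ) := by rcases hj with rfl | rfl <;> decide
  have hk_even : Even (k : ℕ) := by rcases hk with rfl | rfl <;> decide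
  rw [qvec_add_one H hj_even, hcol_add_one H hk_even,
    inner_map_map_of_skew inner_quarterTurn_left quarterTurn_quarterTurn]

/-- The pairing identities ⟨q_j,h_k⟩ = ⟨q_{j+1},h_{k+1}⟩ hold for
all j ∈ {5,7} and k ∈ {9,11} (paper's 1-based indices; 0-indexed here:
j ∈ {4,6}, k ∈ {8,10}). -/
theorem stmt9 (H : Matrix (Fin 2) (Fin 4) ℂ) (hLI : LinearIndependent ℝ (hcol H))
    (j k : Fin 16) (hj : j = 4 ∨ j = 6) (hk : k = 8 ∨ k = 10) :
    ⟪qvec H j, hcol H k⟫_ℝ = ⟪qvec H (j + 1), hcol H (k + 1)⟫_ℝ :=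
  stmt9_general H j k hj hk
end
end
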